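/- arXiv:1805.02345 — 3 statements merged into one kernel-verified Lean document; each statement's English description precedes it below -/
import Mathlib

section
/- Let k ≥ 1 and let P_{3k+2} be the path on 3k+2 vertices. Then every minimum dominating set (γ-set) D of P_{3k+2} satisfies 2k+1 ≤ C_D(P_{3k+2}) ≤ 2k+2, where C_D denotes the domination cover number of D. -/
open Finset

variable {α β : Type*}

/-- `D` is a dominating set of `G`: every vertex outside `D` has a neighbor in `D`. -/
def IsDomSet (G : SimpleGraph α) (D : Finset α) : Prop :=
  ∀ v ∉ D, ∃ u ∈ D, G.Adj u v

/-- The domination number `γ(G)`: minimum cardinality of a dominating set. -/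
noncomputable def domNum (G : SimpleGraph α) : ℕ :=
  sInf {n | ∃ D : Finset α, IsDomSet G D ∧ D.card = n}

/-- The degree of vertex `v` in `G`. -/
noncomputable def vdeg (G : SimpleGraph α) (v : α) : ℕ :=
  Nat.card (G.neighborSet v)

/-- The (domination) cover number of a set of vertices `A`: the sum of degrees. -/
noncomputable def coverNum (G : SimpleGraph α) (A : Finset α) : ℕ :=
  ∑ v ∈ A, vdeg G v

/-- `D` is a minimum dominating set (γ-set) of `G`. -/
def IsGammaSet (G : SimpleGraph α) (D : Finset α) : Prop :=
  IsDomSet G D ∧ D.card = domNum G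

lemma vdeg_eq_degree [Fintype α] (G : SimpleGraph α) [DecidableRel G.Adj] (v : α) :
    vdeg G v = G.degree v := by
  rw [vdeg, Nat.card_eq_fintype_card, SimpleGraph.card_neighborSet_eq_degree]

lemma vdeg_pathGraph_le_two {n : ℕ} (v : Fin n) :
    vdeg (SimpleGraph.pathGraph n) v ≤ 2 := by
  classical
  rw [vdeg_eq_degree, SimpleGraph.degree]
  have h : (SimpleGraph.pathGraph n).neighborFinset v ⊆
      (univ.filter fun u : Fin n => u.val = v.val + 1 ∨ u.val + 1 = v.val) := by
    intro u hu
    rw [SimpleGraph.mem_neighborFinset, SimpleGraph.pathGraph_adj] at hu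
    simp only [mem_filter, mem_univ, true_and]
    omega
  refine le_trans (card_le_card h) ?_
  have h2 : (univ.filter fun u : Fin n => u.val = v.val + 1 ∨ u.val + 1 = v.val) =
      (univ.filter fun u : Fin n => u.val = v.val + 1) ∪
      (univ.filter fun u : Fin n => u.val + 1 = v.val) := by
    ext u; simp only [mem_filter, mem_union, mem_univ, true_and]
  rw [h2]
  refine le_trans (card_union_le _ _) ?_
  have ha : (univ.filter fun u : Fin n => u.val = v.val + 1).card ≤ 1 := by
    apply card_le_one.mpr
    intro a ha b hb
    simp only [mem_filter] at ha hb
    exact Fin.ext (by omega)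
  have hb : (univ.filter fun u : Fin n => u.val + 1 = v.val).card ≤ 1 := by
    apply card_le_one.mpr
    intro a ha b hb
    simp only [mem_filter] at ha hb
    exact Fin.ext (by omega)
  omega

/-- Every minimum dominating set `D` of the path `P_{3k+2}` (`k ≥ 1`) satisfies
`2k + 1 ≤ C_D(P_{3k+2}) ≤ 2k + 2`. -/
theorem gammaSet_pathGraph_three_mul_add_two_coverNum (k : ℕ) (hk : 1 ≤ k)
    (D : Finset (Fin (3 * k + 2)))
    (hdom : IsDomSet (SimpleGraph.pathGraph (3 * k + 2)) D)
    (hcard : D.card = domNum (SimpleGraph.pathGraph (3 * k + 2))) :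
    2 * k + 1 ≤ coverNum (SimpleGraph.pathGraph (3 * k + 2)) D ∧
      coverNum (SimpleGraph.pathGraph (3 * k + 2)) D ≤ 2 * k + 2 := by
  classical
  set G := SimpleGraph.pathGraph (3 * k + 2) with hG
  -- explicit dominating set of size k+1
  have hlt : ∀ i : Fin (k + 1), 3 * i.val + 1 < 3 * k + 2 := by
    intro i; have := i.isLt; omega
  set D₀ : Finset (Fin (3 * k + 2)) :=
    univ.image (fun i : Fin (k + 1) => (⟨3 * i.val + 1, hlt i⟩ : Fin (3 * k + 2))) with hD₀
  have hdom₀ : IsDomSet G D₀ := by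
    intro v hv
    have hmem : ∀ m : ℕ, (h : m < 3 * k + 2) → m % 3 = 1 →
        (⟨m, h⟩ : Fin (3 * k + 2)) ∈ D₀ := by
      intro m h hm
      rw [hD₀, mem_image]
      refine ⟨⟨m / 3, by omega⟩, mem_univ _, ?_⟩
      exact Fin.ext (by simp; omega)
    have hv1 : v.val % 3 ≠ 1 := by
      intro h
      exact hv (by simpa using hmem v.val v.isLt h)
    rcases (show v.val % 3 = 0 ∨ v.val % 3 = 1 ∨ v.val % 3 = 2 by omega) with h0 | h1 | h2
    · have hvlt : v.val + 1 < 3 * k + 2 := by have := v.isLt; omega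
      refine ⟨⟨v.val + 1, hvlt⟩, hmem _ _ (by omega), ?_⟩
      rw [hG, SimpleGraph.pathGraph_adj]; right; simp
    · exact absurd h1 hv1
    · have hv2 : 2 ≤ v.val := by omega
      have hvlt : v.val - 1 < 3 * k + 2 := by have := v.isLt; omega
      refine ⟨⟨v.val - 1, hvlt⟩, hmem _ _ (by omega), ?_⟩
      rw [hG, SimpleGraph.pathGraph_adj]; left; simp; omega
  have hcard₀ : D₀.card = k + 1 := by
    rw [hD₀, card_image_of_injective _ (fun a b hab => by
      have := Fin.mk.injEq .. ▸ hab
      exact Fin.ext (by omega : a.val = b.val))]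
    simp
  have hdnum : domNum G ≤ k + 1 :=
    Nat.sInf_le ⟨D₀, hdom₀, hcard₀⟩
  have hDle : D.card ≤ k + 1 := hcard ▸ hdnum
  -- covering bound
  have hcover : 3 * k + 2 ≤ coverNum G D + D.card := by
    have hsub : (univ : Finset (Fin (3 * k + 2))) ⊆
        D.biUnion (fun v => insert v (G.neighborFinset v)) := by
      intro x _
      simp only [mem_biUnion, mem_insert, SimpleGraph.mem_neighborFinset]
      by_cases hx : x ∈ D
      · exact ⟨x, hx, Or.inl rfl⟩
      · obtain ⟨u, hu, hadj⟩ := hdom x hx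
        exact ⟨u, hu, Or.inr hadj⟩
    calc 3 * k + 2 = (univ : Finset (Fin (3 * k + 2))).card := by simp
      _ ≤ (D.biUnion (fun v => insert v (G.neighborFinset v))).card := card_le_card hsub
      _ ≤ ∑ v ∈ D, (insert v (G.neighborFinset v)).card := card_biUnion_le
      _ ≤ ∑ v ∈ D, (vdeg G v + 1) := by
          refine sum_le_sum fun v _ => ?_
          refine le_trans (card_insert_le _ _) ?_
          rw [vdeg_eq_degree]
          rfl
      _ = coverNum G D + D.card := by
          rw [sum_add_distrib, coverNum]; simp
  have hupper : coverNum G D ≤ 2 * D.card := by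
    rw [coverNum]
    calc ∑ v ∈ D, vdeg G v ≤ ∑ _v ∈ D, 2 :=
          sum_le_sum fun v _ => vdeg_pathGraph_le_two v
      _ = 2 * D.card := by rw [sum_const]; ring
  constructor <;> omega
end

section
/- Let G be a finite simple graph on n vertices that has an efficient dominating set. Then C^min(G) = n − γ(G), i.e., the minimum of the domination cover number C_D(G) over all minimum dominating sets D of G equals n − γ(G). -/
open Finset

variable {α β : Type*}

/-- The minimum domination cover number over all γ-sets of `G`. -/
noncomputable def cmin (G : SimpleGraph α) : ℕ :=
  sInf {c | ∃ D : Finset α, IsGammaSet G D ∧ coverNum G D = c}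

/-- `D` is an efficient dominating set: every vertex outside `D` has exactly one
neighbor in `D`, and no vertex of `D` has a neighbor in `D`. -/
def IsEfficientDomSet (G : SimpleGraph α) (D : Finset α) : Prop :=
  IsDomSet G D ∧ (∀ v ∉ D, ∃! u, u ∈ D ∧ G.Adj u v) ∧
    ∀ u ∈ D, ∀ w ∈ D, ¬ G.Adj u w

lemma vdeg_eq [Fintype α] (G : SimpleGraph α) (v : α) [DecidableRel G.Adj] :
    vdeg G v = (univ.filter (fun u => G.Adj v u)).card := by
  rw [vdeg, Nat.card_eq_fintype_card]
  exact Fintype.card_subtype _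

lemma exists_gammaSet [Fintype α] (G : SimpleGraph α) :
    ∃ D : Finset α, IsGammaSet G D := by
  have hne : ((univ : Finset α)).card ∈ {n | ∃ D : Finset α, IsDomSet G D ∧ D.card = n} :=
    ⟨univ, fun v hv => absurd (mem_univ v) hv, rfl⟩
  obtain ⟨D, hD, hcard⟩ := Nat.sInf_mem (Set.nonempty_of_mem hne)
  exact ⟨D, hD, hcard⟩

lemma domNum_le_card [Fintype α] {G : SimpleGraph α} {A : Finset α} (hA : IsDomSet G A) :
    domNum G ≤ A.card :=
  Nat.sInf_le ⟨A, hA, rfl⟩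

lemma coverNum_lower [Fintype α] {G : SimpleGraph α} {A : Finset α} (hA : IsDomSet G A) :
    Fintype.card α - A.card ≤ coverNum G A := by
  classical
  choose f hf1 hf2 using hA
  set F : α → α := fun v => if h : v ∈ A then v else f v h with hF
  have key : (univ \ A).card = ∑ v ∈ A, ((univ \ A).filter (fun u => F u = v)).card := by
    apply card_eq_sum_card_fiberwise
    intro u hu
    have hu' : u ∉ A := (mem_sdiff.mp hu).2
    simpa [hF, hu'] using hf1 u hu'
  have hcard : Fintype.card α - A.card = (univ \ A).card := by
    rw [card_sdiff_of_subset (subset_univ A), card_univ]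
  rw [hcard, key, coverNum]
  apply sum_le_sum
  intro v hv
  rw [vdeg_eq]
  apply card_le_card
  intro u hu
  simp only [mem_filter, mem_sdiff] at hu ⊢
  obtain ⟨⟨_, huA⟩, hFu⟩ := hu
  have : G.Adj (f u huA) u := hf2 u huA
  rw [show f u huA = F u from by simp [hF, huA], hFu] at this
  exact ⟨mem_univ u, this⟩

lemma coverNum_efficient [Fintype α] {G : SimpleGraph α} {D : Finset α}
    (hD : IsEfficientDomSet G D) :
    coverNum G D = Fintype.card α - D.card := by
  classical
  obtain ⟨hdom, huniq, hind⟩ := hD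
  have huniq' : ∀ v, v ∉ D → ∃ u, (u ∈ D ∧ G.Adj u v) ∧ ∀ y, (y ∈ D ∧ G.Adj y v) → y = u :=
    huniq
  choose f hfa hf3 using huniq'
  have hf1 : ∀ v (h : v ∉ D), f v h ∈ D := fun v h => (hfa v h).1
  have hf2 : ∀ v (h : v ∉ D), G.Adj (f v h) v := fun v h => (hfa v h).2
  set F : α → α := fun v => if h : v ∈ D then v else f v h with hF
  have key : (univ \ D).card = ∑ v ∈ D, ((univ \ D).filter (fun u => F u = v)).card := by
    apply card_eq_sum_card_fiberwise
    intro u hu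
    have hu' : u ∉ D := (mem_sdiff.mp hu).2
    simpa [hF, hu'] using hf1 u hu'
  have hcard : Fintype.card α - D.card = (univ \ D).card := by
    rw [card_sdiff_of_subset (subset_univ D), card_univ]
  rw [hcard, key, coverNum]
  apply sum_congr rfl
  intro v hv
  rw [vdeg_eq]
  congr 1
  ext u
  simp only [mem_filter, mem_sdiff, mem_univ, true_and]
  constructor
  · intro hadj
    have huD : u ∉ D := fun huD => hind v hv u huD hadj
    have : v = f u huD := hf3 u huD v ⟨hv, hadj⟩
    refine ⟨huD, ?_⟩
    simp [hF, huD, this.symm]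
  · rintro ⟨huD, hFu⟩
    have : G.Adj (f u huD) u := hf2 u huD
    rw [show f u huD = F u from by simp [hF, huD], hFu] at this
    exact this

lemma efficient_isGamma [Fintype α] {G : SimpleGraph α} {D : Finset α}
    (hD : IsEfficientDomSet G D) : IsGammaSet G D := by
  classical
  obtain ⟨hdom, huniq, hind⟩ := hD
  refine ⟨hdom, le_antisymm ?_ (domNum_le_card hdom)⟩
  obtain ⟨S, hS, hScard⟩ := exists_gammaSet G
  rw [← hScard]
  choose g hg1 hg2 using hS
  set F : α → α := fun d => if h : d ∈ S then d else g d h with hF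
  apply card_le_card_of_injOn F
  · intro d hd
    by_cases h : d ∈ S
    · simp [hF, h]
    · simpa [hF, h] using hg1 d h
  · intro d1 hd1 d2 hd2 heq
    rw [mem_coe] at hd1 hd2
    have hclose : ∀ d, d ∈ D → F d = d ∨ G.Adj (F d) d := by
      intro d hd
      by_cases h : d ∈ S
      · left; simp [hF, h]
      · right
        have := hg2 d h
        simpa [hF, h] using this
    rcases hclose d1 hd1 with h1 | h1 <;> rcases hclose d2 hd2 with h2 | h2
    · rw [← h1, ← h2, heq]
    · exfalso
      rw [heq] at h1
      rw [h1] at h2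
      exact hind d1 hd1 d2 hd2 h2
    · exfalso
      rw [← heq] at h2
      rw [h2] at h1
      exact hind d2 hd2 d1 hd1 h1
    · by_cases hx : F d1 ∈ D
      · exact absurd h1 (hind (F d1) hx d1 hd1)
      · have h2' : G.Adj (F d1) d2 := heq ▸ h2
        exact ((huniq (F d1) hx).unique ⟨hd1, h1.symm⟩ ⟨hd2, h2'.symm⟩)

/-- If a finite graph `G` on `n` vertices has an efficient dominating set, then
`C^min(G) = n − γ(G)`. -/
theorem cmin_of_efficientDomSet [Fintype α] (G : SimpleGraph α)
    (h : ∃ D : Finset α, IsEfficientDomSet G D) :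
    cmin G = Fintype.card α - domNum G := by
  classical
  obtain ⟨D, hD⟩ := h
  have hγ : IsGammaSet G D := efficient_isGamma hD
  have hmem : Fintype.card α - domNum G ∈
      {c | ∃ D : Finset α, IsGammaSet G D ∧ coverNum G D = c} := by
    refine ⟨D, hγ, ?_⟩
    rw [coverNum_efficient hD, hγ.2]
  apply le_antisymm (Nat.sInf_le hmem)
  have hcm : cmin G ∈ {c | ∃ D : Finset α, IsGammaSet G D ∧ coverNum G D = c} :=
    Nat.sInf_mem (Set.nonempty_of_mem hmem)
  obtain ⟨D', hD', hc⟩ := hcm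
  show Fintype.card α - domNum G ≤ cmin G
  rw [← hc]
  calc Fintype.card α - domNum G = Fintype.card α - D'.card := by rw [hD'.2]
    _ ≤ coverNum G D' := coverNum_lower hD'.1
end

section
/- Let G be a finite simple graph with no isolated vertices such that γ_t(G) = 2γ(G), let S be a minimum dominating set (γ-set) of G, let H be a finite simple graph, and let S' be a minimum dominating set of H with |S'| = 2. Then S × S' is a minimum dominating set (γ-set) of the lexicographic product G∘H. -/
open Finset

variable {α β : Type*}

/-- `S` is a total dominating set of `G`: every vertex has a neighbor in `S`. -/
def IsTotalDomSet (G : SimpleGraph α) (S : Finset α) : Prop :=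
  ∀ v, ∃ u ∈ S, G.Adj u v

/-- The total domination number `γ_t(G)`. -/
noncomputable def totalDomNum (G : SimpleGraph α) : ℕ :=
  sInf {n | ∃ S : Finset α, IsTotalDomSet G S ∧ S.card = n}

/-- The lexicographic product `G ∘ H` of two simple graphs. -/
def lexProd (G : SimpleGraph α) (H : SimpleGraph β) : SimpleGraph (α × β) where
  Adj a b := G.Adj a.1 b.1 ∨ (a.1 = b.1 ∧ H.Adj a.2 b.2)
  symm := by
    constructor
    rintro a b (h | ⟨h1, h2⟩)
    · exact Or.inl h.symm
    · exact Or.inr ⟨h1.symm, h2.symm⟩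
  loopless := by
    constructor
    rintro a (h | ⟨_, h⟩)
    · exact G.loopless.irrefl _ h
    · exact H.loopless.irrefl _ h

/-!
`S × S'` dominates `G ∘ H`, so it remains to show `|D| ≥ γ_t(G) = 2γ(G)` for every dominating
set `D` of `G ∘ H`. The projection `D₁` of `D` dominates `G`. Let `B ⊆ D₁` be the vertices with no
neighbour in `D₁`: over such a vertex the fibre of `D` must dominate its copy of `H` alone, so it
has at least `γ(H) = 2` elements, whence `|D| ≥ |D₁| + |B|`. Adding a neighbour of each vertex of
`B` to `D₁` gives a total dominating set of `G`, so `γ_t(G) ≤ |D₁| + |B|`.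
-/

theorem Finset.card_image_add_card_le_card {γ : Type*} [DecidableEq α] {s : Finset γ}
    {f : γ → α} {B : Finset α} (hB : B ⊆ s.image f)
    (hfib : ∀ a ∈ B, 2 ≤ (s.filter fun x => f x = a).card) :
    (s.image f).card + B.card ≤ s.card := by
  have hfib_pos : ∀ a ∈ s.image f, 1 ≤ (s.filter fun x => f x = a).card := by
    intro a ha
    obtain ⟨x, hx, rfl⟩ := mem_image.mp ha
    exact card_pos.mpr ⟨x, mem_filter.mpr ⟨hx, rfl⟩⟩
  calc (s.image f).card + B.card
      = ∑ a ∈ s.image f, (1 + if a ∈ B then 1 else 0) := by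
        rw [sum_add_distrib, sum_boole, filter_mem_eq_inter, inter_eq_right.mpr hB]
        simp
    _ ≤ ∑ a ∈ s.image f, (s.filter fun x => f x = a).card := by
        refine sum_le_sum fun a ha => ?_
        split_ifs with haB
        · exact hfib a haB
        · simpa using hfib_pos a ha
    _ = s.card := (card_eq_sum_card_image f s).symm

section

variable {G : SimpleGraph α} {H : SimpleGraph β}

theorem IsDomSet.domNum_le_card {D : Finset α} (hD : IsDomSet G D) : domNum G ≤ D.card :=
  Nat.sInf_le ⟨D, hD, rfl⟩

theorem IsDomSet.exists_card_eq_domNum {D : Finset α} (hD : IsDomSet G D) :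
    ∃ D' : Finset α, IsDomSet G D' ∧ D'.card = domNum G :=
  Nat.sInf_mem (s := {n | ∃ D : Finset α, IsDomSet G D ∧ D.card = n}) ⟨_, D, hD, rfl⟩

theorem IsDomSet.totalDomNum_le_card_add_card_filter [DecidableEq α] [DecidableRel G.Adj]
    (hG : ∀ v, ∃ u, G.Adj v u) {D : Finset α} (hD : IsDomSet G D) :
    totalDomNum G ≤ D.card + (D.filter fun a => ¬ ∃ u ∈ D, G.Adj u a).card := by
  choose f hf using hG
  set B := D.filter fun a => ¬ ∃ u ∈ D, G.Adj u a
  have hT : IsTotalDomSet G (D ∪ B.image f) := by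
    intro v
    by_cases hv : ∃ u ∈ D, G.Adj u v
    · obtain ⟨u, hu, huv⟩ := hv
      exact ⟨u, mem_union_left _ hu, huv⟩
    · have hvD : v ∈ D := by
        by_contra hvD
        exact hv (hD v hvD)
      exact ⟨f v, mem_union_right _ (mem_image_of_mem f (mem_filter.mpr ⟨hvD, hv⟩)),
        (hf v).symm⟩
  calc totalDomNum G ≤ (D ∪ B.image f).card := Nat.sInf_le ⟨_, hT, rfl⟩
    _ ≤ D.card + (B.image f).card := card_union_le _ _
    _ ≤ D.card + B.card := Nat.add_le_add_left card_image_le _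

theorem IsDomSet.lexProd_product {S : Finset α} {S' : Finset β} (hS : IsDomSet G S)
    (hS' : IsDomSet H S') (hS'ne : S'.Nonempty) : IsDomSet (lexProd G H) (S ×ˢ S') := by
  obtain ⟨x₀, hx₀⟩ := hS'ne
  rintro ⟨a, x⟩ hax
  rw [mem_product] at hax
  by_cases ha : a ∈ S
  · obtain ⟨u, hu, hux⟩ := hS' x fun hx => hax ⟨ha, hx⟩
    exact ⟨(a, u), mem_product.mpr ⟨ha, hu⟩, Or.inr ⟨rfl, hux⟩⟩
  · obtain ⟨u, hu, hua⟩ := hS a ha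
    exact ⟨(u, x₀), mem_product.mpr ⟨hu, hx₀⟩, Or.inl hua⟩

section Projection

variable [DecidableEq α] {D : Finset (α × β)}

theorem IsDomSet.image_fst_of_lexProd [Nonempty β] (hD : IsDomSet (lexProd G H) D) :
    IsDomSet G (D.image Prod.fst) := by
  intro v hv
  obtain ⟨⟨b, z⟩, hbz, hadj⟩ :=
    hD (v, Classical.arbitrary β) fun hmem => hv (mem_image_of_mem Prod.fst hmem)
  rcases hadj with hbv | ⟨rfl, -⟩
  · exact ⟨b, mem_image_of_mem Prod.fst hbz, hbv⟩
  · exact absurd (mem_image_of_mem Prod.fst hbz) hv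

theorem IsDomSet.fiber_of_lexProd [DecidableEq β] (hD : IsDomSet (lexProd G H) D) {a : α}
    (ha : ¬ ∃ u ∈ D.image Prod.fst, G.Adj u a) :
    IsDomSet H ((D.filter fun p => p.1 = a).image Prod.snd) := by
  intro y hy
  have hay : (a, y) ∉ D := fun hmem =>
    hy (mem_image.mpr ⟨(a, y), mem_filter.mpr ⟨hmem, rfl⟩, rfl⟩)
  obtain ⟨⟨b, z⟩, hbz, hadj⟩ := hD (a, y) hay
  rcases hadj with hba | ⟨hba, hzy⟩
  · exact absurd ⟨b, mem_image_of_mem Prod.fst hbz, hba⟩ ha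
  · exact ⟨z, mem_image.mpr ⟨(b, z), mem_filter.mpr ⟨hbz, hba⟩, rfl⟩, hzy⟩

end Projection

theorem IsDomSet.totalDomNum_le_card_of_lexProd
    (hG : ∀ v, ∃ u, G.Adj v u) (hH : 2 ≤ domNum H) {D : Finset (α × β)}
    (hD : IsDomSet (lexProd G H) D) : totalDomNum G ≤ D.card := by
  classical
  have : Nonempty β := by
    by_contra hβ
    have hempty : IsDomSet H ∅ := fun v => absurd ⟨v⟩ hβ
    exact absurd (hH.trans hempty.domNum_le_card) (by simp)
  calc totalDomNum G ≤ (D.image Prod.fst).card + _ :=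
        hD.image_fst_of_lexProd.totalDomNum_le_card_add_card_filter hG
    _ ≤ D.card := card_image_add_card_le_card (filter_subset _ _) fun a ha =>
        calc 2 ≤ domNum H := hH
          _ ≤ _ := (hD.fiber_of_lexProd (mem_filter.mp ha).2).domNum_le_card
          _ ≤ _ := card_image_le

end

theorem lexProd_gammaSet_prod_general
    (G : SimpleGraph α) (H : SimpleGraph β)
    (hG : ∀ v : α, ∃ u, G.Adj v u) (ht : totalDomNum G = 2 * domNum G)
    (S : Finset α) (hS : IsGammaSet G S)
    (S' : Finset β) (hS' : IsDomSet H S') (hS'min : S'.card = domNum H)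
    (hS'2 : S'.card = 2) :
    IsGammaSet (lexProd G H) (S ×ˢ S') := by
  have hdom := hS.1.lexProd_product hS' (card_pos.mp (by omega))
  refine ⟨hdom, le_antisymm ?_ hdom.domNum_le_card⟩
  obtain ⟨D, hD, hDcard⟩ := hdom.exists_card_eq_domNum
  calc (S ×ˢ S').card = 2 * domNum G := by rw [card_product, hS.2, hS'2, mul_comm]
    _ = totalDomNum G := ht.symm
    _ ≤ D.card := hD.totalDomNum_le_card_of_lexProd hG (by omega)
    _ = domNum (lexProd G H) := hDcard

/-- If `G` has no isolated vertices, `γ_t(G) = 2γ(G)`, `S` is a γ-set of `G`, and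
`S'` is a minimum dominating set of `H` of cardinality 2, then `S × S'` is a
minimum dominating set of `G ∘ H`. -/
theorem lexProd_gammaSet_prod [Fintype α] [Fintype β]
    (G : SimpleGraph α) (H : SimpleGraph β)
    (hG : ∀ v : α, ∃ u, G.Adj v u) (ht : totalDomNum G = 2 * domNum G)
    (S : Finset α) (hS : IsGammaSet G S)
    (S' : Finset β) (hS' : IsDomSet H S') (hS'min : S'.card = domNum H)
    (hS'2 : S'.card = 2) :
    IsGammaSet (lexProd G H) (S ×ˢ S') :=
  lexProd_gammaSet_prod_general G H hG ht S hS S' hS' hS'min hS'2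
end
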